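/- Let I be a radical t-ideal of a PVMD R, let {P_α} be the set of all minimal prime ideals of I, and assume that the intersection ⋂ P_α is irredundant (no P_α may be omitted from the intersection). Then I⁻¹ is a subring of the quotient field K if and only if P_α is not t-invertible for each α. -/

import Mathlib

/-!
Common definitions: star operations (`v`- and `t`-closure), `t`-ideals, `t`-invertibility,
PVMDs, overrings, `t`-linked and `t`-flat overrings, localizations inside the quotient
field, Nagata and Kaplansky transforms, endomorphism rings of ideals.
-/

open scoped Classical

namespace PVMDPaper

noncomputable section

section Generic

variable (A : Type*) [CommRing A] (K : Type*) [Field K] [Algebra A K]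

/-- The image of an integral ideal of `A` inside the field `K`, as an `A`-submodule of `K`. -/
def toK (I : Ideal A) : Submodule A K := Submodule.map (Algebra.linearMap A K) I

variable {A K}

/-- The dual `I⁻¹ = (A : I) = {x ∈ K : x I ⊆ A}` of a submodule of `K`. -/
def dual (I : Submodule A K) : Submodule A K := 1 / I

/-- The `v`-closure `I_v = (I⁻¹)⁻¹`. -/
def vOp (I : Submodule A K) : Submodule A K := 1 / (1 / I)

/-- The `t`-closure `I_t`: the union of `J_v` where `J` ranges over the nonzero finitely
generated submodules `J ≤ I` (the union of this directed family is its supremum). -/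
def tOp (I : Submodule A K) : Submodule A K :=
  sSup {V | ∃ J : Submodule A K, J ≠ ⊥ ∧ J.FG ∧ J ≤ I ∧ V = vOp J}

variable (K)

/-- An (integral) ideal `I` of `A` is a `t`-ideal if `I = I_t`. -/
def IsTIdeal (I : Ideal A) : Prop := tOp (toK A K I) = toK A K I

/-- An ideal `I` is `t`-invertible if `(I I⁻¹)_t = A`. -/
def IsTInvertible (I : Ideal A) : Prop := tOp (toK A K I * dual (toK A K I)) = 1

/-- A `t`-maximal ideal: an ideal maximal in the set of proper integral `t`-ideals. -/
def IsTMaximal (M : Ideal A) : Prop :=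
  M ≠ ⊤ ∧ IsTIdeal K M ∧ ∀ J : Ideal A, J ≠ ⊤ → IsTIdeal K J → M ≤ J → J = M

variable (A)

/-- `A` is a Prüfer `v`-multiplication domain: every nonzero finitely generated ideal
is `t`-invertible. -/
def IsPVMD : Prop := ∀ I : Ideal A, I ≠ ⊥ → I.FG → IsTInvertible K I

/-- `Spec_t(A)` is Noetherian: the ascending chain condition on radical `t`-ideals. -/
def TSpecNoetherian : Prop :=
  ∀ f : ℕ →o Ideal A, (∀ n, IsTIdeal K (f n) ∧ (f n).radical = f n) →
    ∃ n, ∀ m, n ≤ m → f m = f n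

variable {A K}

/-- A submodule of `K` is a subring of `K` iff it contains `1` and is closed under
multiplication (being an additive subgroup already). -/
def IsSubringOf (S : Submodule A K) : Prop :=
  (1 : K) ∈ S ∧ ∀ x ∈ S, ∀ y ∈ S, x * y ∈ S

variable (K)

/-- The localization `A_P = {a/s : a ∈ A, s ∈ A ∖ P}` viewed as a subset of `K`. -/
def loc (P : Ideal A) : Set K :=
  {x | ∃ a s : A, s ∉ P ∧ x * algebraMap A K s = algebraMap A K a}

/-- The set `J A_P = {a/s : a ∈ J, s ∈ A ∖ P} ⊆ K`. -/
def locIdealAt (J P : Ideal A) : Set K :=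
  {x | ∃ a ∈ J, ∃ s : A, s ∉ P ∧ x * algebraMap A K s = algebraMap A K a}

/-- `Z(A, I)`: the set of zero divisors on `A/I`. -/
def ZSet (I : Ideal A) : Set A := {x | ∃ a : A, a ∉ I ∧ x * a ∈ I}

/-- `Q` is a maximal prime ideal of `Z(A,I)`: a prime contained in `Z(A,I)`, maximal
(under inclusion) among the primes contained in `Z(A,I)`. -/
def MaxPrimeOfZ (I Q : Ideal A) : Prop :=
  Q.IsPrime ∧ (Q : Set A) ⊆ ZSet I ∧
    ∀ Q' : Ideal A, Q'.IsPrime → (Q' : Set A) ⊆ ZSet I → Q ≤ Q' → Q' = Q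

end Generic

section Overring

variable {R : Type*} [CommRing R] [IsDomain R]
variable {K : Type*} [Field K] [Algebra R K] [IsFractionRing R K]

/-- The extension `IT` of an ideal `I` of `R` to an overring `T`, as a `T`-submodule of `K`. -/
def extendI (I : Ideal R) (T : Subalgebra R K) : Submodule T K :=
  Submodule.span T (algebraMap R K '' (I : Set R))

/-- The extension `IT` of an `R`-submodule `I` of `K` to an overring `T`. -/
def extendS (I : Submodule R K) (T : Subalgebra R K) : Submodule T K :=
  Submodule.span T (I : Set K)

/-- An overring `T` of `R` is `t`-linked over `R` if `(IT)⁻¹ = T` for each finitely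
generated ideal `I` of `R` with `I⁻¹ = R`. -/
def IsTLinked (T : Subalgebra R K) : Prop :=
  ∀ I : Ideal R, I.FG → dual (toK R K I) = 1 → dual (extendI I T) = 1

/-- An overring `T` of `R` is `t`-flat over `R` if `T_M = R_{M ∩ R}` for each
`t`-maximal ideal `M` of `T`. -/
def IsTFlat (T : Subalgebra R K) : Prop :=
  ∀ M : Ideal T, IsTMaximal K M → loc K M = loc K (M.comap (algebraMap R T))

variable (R K)

/-- `R` is a `tQR`-domain: a PVMD all of whose `t`-linked overrings are localizations
of `R` at multiplicative sets. -/
def IsTQR : Prop :=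
  IsPVMD R K ∧ ∀ T : Subalgebra R K, IsTLinked T → ∃ S : Submonoid R,
    (T : Set K) = {x | ∃ a : R, ∃ s ∈ S, x * algebraMap R K s = algebraMap R K a}

variable {R K}
variable (K)

/-- The endomorphism ring `(I : I) = {x ∈ K : x I ⊆ I}` of an ideal `I`, as an
overring of `R`. -/
def endoRing (I : Ideal R) : Subalgebra R K where
  carrier := {x : K | ∀ y ∈ toK R K I, x * y ∈ toK R K I}
  mul_mem' := by
    intro a b ha hb y hy
    rw [mul_assoc]
    exact ha _ (hb _ hy)
  one_mem' := by
    intro y hy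
    rwa [one_mul]
  add_mem' := by
    intro a b ha hb y hy
    rw [add_mul]
    exact Submodule.add_mem _ (ha y hy) (hb y hy)
  zero_mem' := by
    intro y hy
    rw [zero_mul]
    exact Submodule.zero_mem _
  algebraMap_mem' := by
    intro r y hy
    rw [← Algebra.smul_def]
    exact Submodule.smul_mem _ r hy

set_option synthInstance.maxHeartbeats 400000 in
/-- The ideal `I`, viewed as an ideal of its endomorphism ring `(I : I)`. -/
def idealInEndo (I : Ideal R) : Ideal (endoRing K I) where
  carrier := {x | (x : K) ∈ toK R K I}
  add_mem' := by
    intro a b ha hb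
    simp only [Set.mem_setOf_eq] at *
    rw [AddMemClass.coe_add]
    exact Submodule.add_mem _ ha hb
  zero_mem' := by
    simp only [Set.mem_setOf_eq, ZeroMemClass.coe_zero]
    exact Submodule.zero_mem _
  smul_mem' := by
    intro c x hx
    simp only [Set.mem_setOf_eq] at *
    rw [smul_eq_mul, MulMemClass.coe_mul]
    exact c.2 _ hx

/-- The Kaplansky transform `Ω(I) = {u ∈ K : ∀ a ∈ I, ∃ n ≥ 1, u aⁿ ∈ R}`, as an
overring of `R`. -/
def kaplansky (I : Ideal R) : Subalgebra R K where
  carrier := {u : K | ∀ a ∈ I, ∃ n : ℕ, 0 < n ∧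
    ∃ r : R, u * (algebraMap R K a) ^ n = algebraMap R K r}
  mul_mem' := by
    intro u v hu hv a ha
    obtain ⟨n, hn, r, hr⟩ := hu a ha
    obtain ⟨m, hm, s, hs⟩ := hv a ha
    refine ⟨n + m, by omega, r * s, ?_⟩
    rw [map_mul, ← hr, ← hs, pow_add]
    ring
  one_mem' := by
    intro a ha
    exact ⟨1, one_pos, a, by rw [pow_one, one_mul]⟩
  add_mem' := by
    intro u v hu hv a ha
    obtain ⟨n, hn, r, hr⟩ := hu a ha
    obtain ⟨m, hm, s, hs⟩ := hv a ha
    refine ⟨n + m, by omega, r * a ^ m + s * a ^ n, ?_⟩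
    rw [map_add, map_mul, map_mul, map_pow, map_pow, ← hr, ← hs, pow_add, add_mul]
    ring
  zero_mem' := by
    intro a ha
    exact ⟨1, one_pos, 0, by rw [map_zero, zero_mul]⟩
  algebraMap_mem' := by
    intro r a ha
    exact ⟨1, one_pos, r * a, by rw [map_mul, pow_one]⟩

/-- The Nagata (ideal) transform `T(I) = ⋃_{n ≥ 1} (R : Iⁿ)`, as an overring of `R`. -/
def nagata (I : Ideal R) : Subalgebra R K where
  carrier := {x : K | ∃ n : ℕ, ∀ y ∈ I ^ (n + 1),
    ∃ r : R, x * algebraMap R K y = algebraMap R K r}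
  mul_mem' := by
    intro x x' hx hx'
    obtain ⟨n, hn⟩ := hx
    obtain ⟨m, hm⟩ := hx'
    refine ⟨n + m + 1, fun y hy => ?_⟩
    rw [show n + m + 1 + 1 = (n + 1) + (m + 1) by omega, pow_add] at hy
    refine Submodule.mul_induction_on hy ?_ ?_
    · intro a ha b hb
      obtain ⟨r, hr⟩ := hn a ha
      obtain ⟨s, hs⟩ := hm b hb
      refine ⟨r * s, ?_⟩
      rw [map_mul, map_mul, ← hr, ← hs]
      ring
    · rintro y1 y2 ⟨r1, h1⟩ ⟨r2, h2⟩
      exact ⟨r1 + r2, by rw [map_add, map_add, mul_add, h1, h2]⟩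
  one_mem' := ⟨0, fun y _ => ⟨y, by rw [one_mul]⟩⟩
  add_mem' := by
    intro x x' hx hx'
    obtain ⟨n, hn⟩ := hx
    obtain ⟨m, hm⟩ := hx'
    refine ⟨n + m + 1, fun y hy => ?_⟩
    have h1 : y ∈ I ^ (n + 1) := Ideal.pow_le_pow_right (by omega) hy
    have h2 : y ∈ I ^ (m + 1) := Ideal.pow_le_pow_right (by omega) hy
    obtain ⟨r, hr⟩ := hn y h1
    obtain ⟨s, hs⟩ := hm y h2
    exact ⟨r + s, by rw [map_add, add_mul, hr, hs]⟩
  zero_mem' := ⟨0, fun y _ => ⟨0, by rw [map_zero, zero_mul]⟩⟩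
  algebraMap_mem' := by
    intro r
    exact ⟨0, fun y _ => ⟨r * y, by rw [map_mul]⟩⟩

end Overring

/-!
For `(⇐)`, take `x ∈ I⁻¹`, `b ∈ I` and put `r = xb ∈ R`. For a minimal prime `Q`, irredundance
gives `a ∉ Q` with `aQ ⊆ I`, so `xa ∈ Q⁻¹`. In a PVMD a prime `Q` with `QQ⁻¹ ⊄ Q` is
`t`-invertible: if `u ∈ Q⁻¹`, `q ∈ Q` and `c = uq ∉ Q`, then primality of `Q` forces
`Q = q (c, q)⁻¹`. Hence `xab ∈ Q`, so `r ∈ Q`; thus `r ∈ √I = I`, i.e. `I⁻¹ = (I : I)` is a ring.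

For `(⇒)`, if a minimal prime `P` is `t`-invertible, some nonzero finitely generated `B ⊆ P`
has `1 ∈ (BP⁻¹)_v`, and minimality of `P` over `I` gives `s ∉ P` with `sBᵐ ⊆ I`. Since
`P⁻¹ ⊆ I⁻¹` and `I⁻¹` is a ring, `s (BP⁻¹)ᵐ⁺¹ ⊆ I I⁻¹ B ⊆ B`, so `s ∈ B_v`. But `B_v ⊆ P`,
as for `y ∈ B_v ⊆ R` and suitable `s' ∉ P`, `s' yᵐ ∈ (s' Bᵐ)_v ⊆ I_t = I ⊆ P`.
-/

open Submodule

section VClosure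

variable {R : Type*} [CommRing R] {K : Type*} [Field K] [Algebra R K]

theorem mem_dual_iff {M : Submodule R K} {x : K} :
    x ∈ dual M ↔ ∀ y ∈ M, x * y ∈ (1 : Submodule R K) :=
  Iff.rfl

theorem mem_dual_span_iff {T : Set K} {x : K} :
    x ∈ dual (span R T) ↔ ∀ t ∈ T, x * t ∈ (1 : Submodule R K) := by
  change span R T ≤ (1 : Submodule R K).comap (LinearMap.mulLeft R x) ↔ _
  exact span_le

theorem dual_antitone {M N : Submodule R K} (h : M ≤ N) : dual N ≤ dual M :=
  fun _ hx y hy => hx y (h hy)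

theorem mul_dual_le_one (M : Submodule R K) : M * dual M ≤ 1 :=
  mul_one_div_le_one

theorem le_vOp (M : Submodule R K) : M ≤ vOp M :=
  le_div_iff_mul_le.2 mul_one_div_le_one

theorem vOp_mono {M N : Submodule R K} (h : M ≤ N) : vOp M ≤ vOp N :=
  dual_antitone (dual_antitone h)

theorem vOp_le_one {M : Submodule R K} (h : M ≤ 1) : vOp M ≤ 1 := fun x hx => by
  simpa using hx 1 (one_mem_div.2 h)

theorem vOp_mul_vOp_le (X Y : Submodule R K) : vOp X * vOp Y ≤ vOp (X * Y) := by
  refine mul_le.2 fun a ha b hb z hz => ?_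
  have hbz : b * z ∈ dual X := fun x hx => by
    have hzx : z * x ∈ dual Y := fun y hy => by
      simpa only [mul_assoc] using hz (x * y) (mul_mem_mul hx hy)
    simpa only [mul_assoc] using hb _ hzx
  simpa only [mul_assoc] using ha _ hbz

theorem vOp_pow_le (M : Submodule R K) (n : ℕ) : vOp M ^ n ≤ vOp (M ^ n) := by
  induction n with
  | zero => simpa only [pow_zero] using le_vOp 1
  | succ n ih =>
    rw [pow_succ, pow_succ]
    exact (mul_le_mul' ih le_rfl).trans (vOp_mul_vOp_le _ _)

theorem dual_span_singleton_mul {c : K} (hc : c ≠ 0) (M : Submodule R K) :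
    dual (span R {c} * M) = span R {c⁻¹} * dual M := by
  ext x
  constructor
  · intro hx
    have hcx : c * x ∈ dual M := fun m hm => by
      simpa only [mul_comm, mul_left_comm] using hx (c * m) (mem_span_singleton_mul.2 ⟨m, hm, rfl⟩)
    exact mem_span_singleton_mul.2 ⟨c * x, hcx, by field_simp⟩
  · intro hx
    obtain ⟨z, hz, rfl⟩ := mem_span_singleton_mul.1 hx
    intro y hy
    obtain ⟨m, hm, rfl⟩ := mem_span_singleton_mul.1 hy
    simpa only [show c⁻¹ * z * (c * m) = z * m by field_simp] using hz m hm

theorem vOp_le_tOp {J M : Submodule R K} (h0 : J ≠ ⊥) (hfg : J.FG) (hle : J ≤ M) :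
    vOp J ≤ tOp M :=
  le_sSup ⟨J, h0, hfg, hle, rfl⟩

theorem tOp_mono {M N : Submodule R K} (h : M ≤ N) : tOp M ≤ tOp N :=
  sSup_le_sSup fun _ ⟨J, h0, hfg, hle, hV⟩ => ⟨J, h0, hfg, hle.trans h, hV⟩

theorem tOp_le_one {M : Submodule R K} (h : M ≤ 1) : tOp M ≤ 1 :=
  sSup_le fun _ ⟨_, _, _, hle, hV⟩ => hV ▸ vOp_le_one (hle.trans h)

theorem exists_mem_vOp_of_mem_tOp {M : Submodule R K} {x : K} (hx : x ∈ tOp M) (hx0 : x ≠ 0) :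
    ∃ J : Submodule R K, J ≠ ⊥ ∧ J.FG ∧ J ≤ M ∧ x ∈ vOp J := by
  set S := {V | ∃ J : Submodule R K, J ≠ ⊥ ∧ J.FG ∧ J ≤ M ∧ V = vOp J}
  have hS : S.Nonempty := by
    by_contra hS
    rw [Set.not_nonempty_iff_eq_empty] at hS
    exact hx0 (by simpa [tOp, S, hS] using hx)
  have hdir : DirectedOn (· ≤ ·) S := by
    rintro _ ⟨J₁, h₁, hfg₁, hle₁, rfl⟩ _ ⟨J₂, -, hfg₂, hle₂, rfl⟩
    exact ⟨vOp (J₁ ⊔ J₂), ⟨J₁ ⊔ J₂, fun h => h₁ (le_bot_iff.1 (h ▸ le_sup_left)),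
      hfg₁.sup hfg₂, sup_le hle₁ hle₂, rfl⟩, vOp_mono le_sup_left, vOp_mono le_sup_right⟩
  obtain ⟨_, ⟨J, h0, hfg, hle, rfl⟩, hxJ⟩ := (mem_sSup_of_directed hS hdir).1 hx
  exact ⟨J, h0, hfg, hle, hxJ⟩

theorem pow_le_of_isSubringOf {S X : Submodule R K} (hS : IsSubringOf S) (hX : X ≤ S) (n : ℕ) :
    X ^ n ≤ S := by
  induction n with
  | zero => exact one_le.2 hS.1
  | succ n ih =>
    rw [pow_succ]
    exact mul_le.2 fun x hx y hy => hS.2 x (ih hx) y (hX hy)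

theorem isSubringOf_dual_of_mul_mem {M : Submodule R K} (hM : M ≤ 1)
    (h : ∀ x ∈ dual M, ∀ y ∈ M, x * y ∈ M) : IsSubringOf (dual M) :=
  ⟨one_mem_div.2 hM, fun x hx y hy z hz => by rw [mul_assoc]; exact hx _ (h y hy z hz)⟩

end VClosure

theorem exists_span_singleton_mul_le_of_le_comap_map {R S : Type*} [CommRing R] [CommRing S]
    [Algebra R S] (M : Submonoid R) [IsLocalization M S] {I D : Ideal R} (hD : D.FG)
    (h : D ≤ (I.map (algebraMap R S)).comap (algebraMap R S)) :
    ∃ s ∈ M, Ideal.span {s} * D ≤ I := by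
  induction D, hD using Submodule.fg_induction with
  | singleton x =>
    obtain ⟨s, hs, hsx⟩ := (IsLocalization.algebraMap_mem_map_algebraMap_iff M S I x).1
      (h (mem_span_singleton_self x))
    exact ⟨s, hs, by
      rwa [← Ideal.span, Ideal.span_singleton_mul_span_singleton, Ideal.span_singleton_le_iff_mem]⟩
  | sup D₁ D₂ _ _ h₁ h₂ =>
    obtain ⟨s₁, hs₁, hle₁⟩ := h₁ (le_sup_left.trans h)
    obtain ⟨s₂, hs₂, hle₂⟩ := h₂ (le_sup_right.trans h)
    refine ⟨s₁ * s₂, M.mul_mem hs₁ hs₂, ?_⟩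
    rw [Ideal.mul_sup, ← Ideal.span_singleton_mul_span_singleton]
    refine sup_le ?_ ?_
    · rw [mul_right_comm]
      exact Ideal.mul_le_left.trans hle₁
    · rw [mul_assoc]
      exact Ideal.mul_le_right.trans hle₂

theorem exists_span_singleton_mul_pow_le {R : Type*} [CommRing R] {I P C : Ideal R}
    (hP : P ∈ I.minimalPrimes) (hC : C.FG) (hCP : C ≤ P) :
    ∃ s ∉ P, ∃ m : ℕ, Ideal.span {s} * C ^ m ≤ I := by
  have := hP.1.1
  let Rₚ := Localization.AtPrime P
  have hPrad : P ≤ ((I.map (algebraMap R Rₚ)).comap (algebraMap R Rₚ)).radical := by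
    rw [← Ideal.comap_radical, IsLocalization.AtPrime.radical_map_of_mem_minimalPrimes Rₚ P I hP]
    exact Ideal.le_comap_map
  obtain ⟨m, hm⟩ := Ideal.exists_pow_le_of_le_radical_of_fg (hCP.trans hPrad) hC
  obtain ⟨s, hs, hsm⟩ :=
    exists_span_singleton_mul_le_of_le_comap_map (S := Rₚ) P.primeCompl (hC.pow (n := m)) hm
  exact ⟨s, hs, m, hsm⟩

theorem mul_mem_of_mem_sInf_minimalPrimes_diff {R : Type*} [CommRing R] {I Q : Ideal R}
    (hrad : I.radical = I) {a p : R} (ha : a ∈ sInf (I.minimalPrimes \ {Q})) (hp : p ∈ Q) :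
    a * p ∈ I := by
  rw [← hrad, ← Ideal.sInf_minimalPrimes]
  refine Ideal.mem_sInf.2 fun Q' hQ' => ?_
  by_cases h : Q' = Q
  · exact h ▸ Q.mul_mem_left a hp
  · exact Q'.mul_mem_right p (Ideal.mem_sInf.1 ha ⟨hQ', h⟩)

section ToK

variable {R : Type*} [CommRing R] {K : Type*} [Field K] [Algebra R K]

theorem mem_toK {I : Ideal R} {x : K} : x ∈ toK R K I ↔ ∃ i ∈ I, algebraMap R K i = x :=
  Iff.rfl

theorem algebraMap_mem_toK_iff [IsFractionRing R K] {I : Ideal R} {r : R} :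
    algebraMap R K r ∈ toK R K I ↔ r ∈ I :=
  ⟨fun ⟨_, hi, he⟩ => IsFractionRing.injective R K he ▸ hi, fun h => ⟨r, h, rfl⟩⟩

theorem toK_le_toK_iff [IsFractionRing R K] {I J : Ideal R} : toK R K I ≤ toK R K J ↔ I ≤ J :=
  map_le_map_iff_of_injective (IsFractionRing.injective R K) I J

theorem toK_mono {I J : Ideal R} (h : I ≤ J) : toK R K I ≤ toK R K J :=
  map_mono h

theorem toK_ne_bot [IsFractionRing R K] {I : Ideal R} (hI : I ≠ ⊥) : toK R K I ≠ ⊥ := by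
  simpa only [toK, Submodule.map_bot] using
    (map_injective_of_injective (f := Algebra.linearMap R K) (IsFractionRing.injective R K)).ne hI

theorem toK_le_one (I : Ideal R) : toK R K I ≤ 1 := by
  rintro _ ⟨i, -, rfl⟩
  exact mem_one.2 ⟨i, rfl⟩

theorem toK_mul (I J : Ideal R) : toK R K (I * J) = toK R K I * toK R K J :=
  Submodule.map_mul I J (Algebra.ofId R K)

theorem toK_pow (I : Ideal R) (n : ℕ) : toK R K (I ^ n) = toK R K I ^ n :=
  Submodule.map_pow I (Algebra.ofId R K) n

theorem toK_span (S : Set R) : toK R K (Ideal.span S) = span R (algebraMap R K '' S) :=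
  map_span _ S

theorem exists_toK_eq_of_le_one {M : Submodule R K} (hM : M ≤ 1) : ∃ J : Ideal R, toK R K J = M :=
  ⟨M.comap (Algebra.linearMap R K), by
    rw [toK, map_comap_eq, inf_eq_right.2 (one_eq_range (R := R) (A := K) ▸ hM)]⟩

theorem exists_fg_le_of_mem_toK_mul {P : Ideal R} {N : Submodule R K} {x : K}
    (hx : x ∈ toK R K P * N) : ∃ B : Ideal R, B.FG ∧ B ≤ P ∧ x ∈ toK R K B * N := by
  refine Submodule.mul_induction_on hx (fun y hy n hn => ?_) fun x y hx hy => ?_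
  · obtain ⟨p, hp, rfl⟩ := hy
    exact ⟨Ideal.span {p}, fg_span_singleton p, (Ideal.span_singleton_le_iff_mem P).2 hp,
      mul_mem_mul ⟨p, Ideal.mem_span_singleton_self p, rfl⟩ hn⟩
  · obtain ⟨B₁, hfg₁, hle₁, hx⟩ := hx
    obtain ⟨B₂, hfg₂, hle₂, hy⟩ := hy
    exact ⟨B₁ ⊔ B₂, Submodule.FG.sup hfg₁ hfg₂, sup_le hle₁ hle₂,
      add_mem (mul_le_mul' (toK_mono le_sup_left) le_rfl hx)
        (mul_le_mul' (toK_mono le_sup_right) le_rfl hy)⟩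

theorem exists_fg_le_of_fg_le_toK_mul {P : Ideal R} {N J : Submodule R K} (hJ : J.FG)
    (hJP : J ≤ toK R K P * N) : ∃ B : Ideal R, B.FG ∧ B ≤ P ∧ J ≤ toK R K B * N := by
  induction J, hJ using Submodule.fg_induction with
  | singleton x =>
    obtain ⟨B, hfg, hle, hx⟩ := exists_fg_le_of_mem_toK_mul (hJP (mem_span_singleton_self x))
    exact ⟨B, hfg, hle, (span_singleton_le_iff_mem _ _).2 hx⟩
  | sup J₁ J₂ _ _ h₁ h₂ =>
    obtain ⟨B₁, hfg₁, hle₁, hJ₁⟩ := h₁ (le_sup_left.trans hJP)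
    obtain ⟨B₂, hfg₂, hle₂, hJ₂⟩ := h₂ (le_sup_right.trans hJP)
    exact ⟨B₁ ⊔ B₂, Submodule.FG.sup hfg₁ hfg₂, sup_le hle₁ hle₂,
      sup_le (hJ₁.trans (mul_le_mul' (toK_mono le_sup_left) le_rfl))
        (hJ₂.trans (mul_le_mul' (toK_mono le_sup_right) le_rfl))⟩

theorem exists_fg_one_mem_vOp_of_isTInvertible {P : Ideal R} (hP : IsTInvertible K P) :
    ∃ B : Ideal R, B.FG ∧ B ≠ ⊥ ∧ B ≤ P ∧ (1 : K) ∈ vOp (toK R K B * dual (toK R K P)) := by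
  have h1 : (1 : K) ∈ tOp (toK R K P * dual (toK R K P)) := by
    rw [show tOp _ = 1 from hP]
    exact one_le.1 le_rfl
  obtain ⟨J, hJ0, hJfg, hJle, h1J⟩ := exists_mem_vOp_of_mem_tOp h1 one_ne_zero
  obtain ⟨B, hBfg, hBP, hJB⟩ := exists_fg_le_of_fg_le_toK_mul hJfg hJle
  refine ⟨B, hBfg, ?_, hBP, vOp_mono hJB h1J⟩
  rintro rfl
  exact hJ0 (le_bot_iff.1 (by simpa only [toK, Submodule.map_bot, bot_mul] using hJB))

theorem isTInvertible_of_toK_eq_span_singleton_mul_dual {P E : Ideal R} {q : K} (hq : q ≠ 0)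
    (hE : IsTInvertible K E) (hPE : toK R K P = span R {q} * dual (toK R K E)) :
    IsTInvertible K P := by
  set N := dual (toK R K E)
  have hPP : toK R K P * dual (toK R K P) = N * dual N := by
    rw [hPE, dual_span_singleton_mul hq]
    calc _ = span R {q} * span R {q⁻¹} * (N * dual N) := by ring
      _ = N * dual N := by
        rw [span_mul_span, Set.singleton_mul_singleton, mul_inv_cancel₀ hq, ← one_eq_span, one_mul]
  unfold IsTInvertible
  rw [hPP]
  refine le_antisymm (tOp_le_one (mul_dual_le_one N)) ?_
  calc 1 = tOp (toK R K E * N) := hE.symm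
    _ ≤ tOp (N * dual N) := tOp_mono (by rw [mul_comm]; exact mul_le_mul' le_rfl (le_vOp _))

theorem le_or_le_of_mul_le_toK [IsFractionRing R K] {P : Ideal R} (hP : P.IsPrime)
    {W G : Submodule R K} (hW : W ≤ 1) (hG : G ≤ 1) (h : W * G ≤ toK R K P) :
    W ≤ toK R K P ∨ G ≤ toK R K P := by
  obtain ⟨W, rfl⟩ := exists_toK_eq_of_le_one hW
  obtain ⟨G, rfl⟩ := exists_toK_eq_of_le_one hG
  rw [← toK_mul, toK_le_toK_iff] at h
  simpa only [toK_le_toK_iff] using hP.mul_le.1 h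

theorem mem_dual_toK_span_pair {a b : R} {x : K} :
    x ∈ dual (toK R K (Ideal.span {a, b})) ↔
      x * algebraMap R K a ∈ (1 : Submodule R K) ∧ x * algebraMap R K b ∈ (1 : Submodule R K) := by
  simp only [toK_span, Set.image_pair, mem_dual_span_iff, Set.forall_mem_insert,
    Set.mem_singleton_iff, forall_eq]

theorem isTInvertible_of_mul_notMem [IsFractionRing R K] (hR : IsPVMD R K) {P : Ideal R}
    (hP : P.IsPrime) {u : K} {q : R} (hu : u ∈ dual (toK R K P)) (hq : q ∈ P)
    (huq : u * algebraMap R K q ∉ toK R K P) : IsTInvertible K P := by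
  set q' := algebraMap R K q
  have hq'P : q' ∈ toK R K P := algebraMap_mem_toK_iff.2 hq
  have hq'0 : q' ≠ 0 := fun h => huq (by rw [h, mul_zero]; exact zero_mem _)
  obtain ⟨c, hc⟩ := mem_one.1 (hu q' hq'P)
  set E := Ideal.span {c, q}
  have hE0 : E ≠ ⊥ := fun h => by
    have hqE : q ∈ E := Ideal.subset_span (by simp)
    rw [h, Ideal.mem_bot] at hqE
    exact hq'0 (by simp [q', hqE])
  set W := span R {q'} * dual (toK R K E)
  have hPW : toK R K P ≤ W := fun y hy => by
    refine mem_span_singleton_mul.2 ⟨y / q', mem_dual_toK_span_pair.2 ⟨?_, ?_⟩, by field_simp⟩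
    · rw [hc, show y / q' * (u * q') = u * y by field_simp]
      exact hu y hy
    · rw [div_mul_cancel₀ y hq'0]
      exact toK_le_one P hy
  have hW1 : W ≤ 1 := fun w hw => by
    obtain ⟨z, hz, rfl⟩ := mem_span_singleton_mul.1 hw
    rw [mul_comm]
    exact (mem_dual_toK_span_pair.1 hz).2
  have huW : u ∈ dual W := fun w hw => by
    obtain ⟨z, hz, rfl⟩ := mem_span_singleton_mul.1 hw
    rw [← mul_assoc, ← hc, mul_comm]
    exact (mem_dual_toK_span_pair.1 hz).1
  have hWG : W * (dual W * toK R K P) ≤ toK R K P := by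
    rw [← mul_assoc]
    simpa only [one_mul] using mul_le_mul' (mul_dual_le_one W) le_rfl
  -- `W⁻¹ P ⊆ P` is excluded by `u q' ∉ P`, so primality leaves `P = W`
  rcases le_or_le_of_mul_le_toK hP hW1 (mul_le.2 fun d hd y hy => mem_dual_iff.1 hd y (hPW hy))
    hWG with hWP | hGP
  · exact isTInvertible_of_toK_eq_span_singleton_mul_dual hq'0
      (hR E hE0 ⟨{c, q}, by simp [E]⟩) (le_antisymm hPW hWP)
  · exact (huq (hGP (mul_mem_mul huW hq'P))).elim

theorem mul_mem_toK_of_mem_dual [IsFractionRing R K] (hR : IsPVMD R K) {I : Ideal R}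
    (hrad : I.radical = I) (hirr : ∀ P ∈ I.minimalPrimes, ¬ sInf (I.minimalPrimes \ {P}) ≤ P)
    (hP : ∀ P ∈ I.minimalPrimes, ¬ IsTInvertible K P) {x y : K} (hx : x ∈ dual (toK R K I))
    (hy : y ∈ toK R K I) : x * y ∈ toK R K I := by
  obtain ⟨b, hb, rfl⟩ := mem_toK.1 hy
  obtain ⟨r, hr⟩ := mem_one.1 (hx _ hy)
  rw [← hr, algebraMap_mem_toK_iff, ← hrad, ← Ideal.sInf_minimalPrimes]
  refine Ideal.mem_sInf.2 fun Q hQ => ?_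
  obtain ⟨a, haQ', haQ⟩ := SetLike.not_le_iff_exists.1 (hirr Q hQ)
  have hxa : x * algebraMap R K a ∈ dual (toK R K Q) := by
    intro z hz
    obtain ⟨p, hp, rfl⟩ := mem_toK.1 hz
    rw [mul_assoc, ← map_mul]
    exact hx _ (algebraMap_mem_toK_iff.2 (mul_mem_of_mem_sInf_minimalPrimes_diff hrad haQ' hp))
  have hxab : x * algebraMap R K a * algebraMap R K b ∈ toK R K Q := by
    by_contra h
    exact hP Q hQ (isTInvertible_of_mul_notMem hR hQ.1.1 hxa (hQ.1.2 hb) h)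
  have har : a * r ∈ Q := by
    rwa [← algebraMap_mem_toK_iff (K := K), map_mul, hr, mul_left_comm, ← mul_assoc]
  exact (hQ.1.1.mem_or_mem har).resolve_left haQ

end ToK

section Domain

variable {R : Type*} [CommRing R] [IsDomain R]
variable {K : Type*} [Field K] [Algebra R K] [IsFractionRing R K]

theorem vOp_toK_le_of_mem_minimalPrimes {I P C : Ideal R} (htI : IsTIdeal K I)
    (hP : P ∈ I.minimalPrimes) (hC : C.FG) (hC0 : C ≠ ⊥) (hCP : C ≤ P) :
    vOp (toK R K C) ≤ toK R K P := by
  obtain ⟨s, hsP, m, hsC⟩ := exists_span_singleton_mul_pow_le hP hC hCP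
  have hs0 : s ≠ 0 := fun h => hsP (h ▸ P.zero_mem)
  have hD0 : Ideal.span {s} * C ^ m ≠ ⊥ :=
    mul_ne_zero (Ideal.span_singleton_eq_bot.not.2 hs0) (pow_ne_zero m hC0)
  have hvD : vOp (toK R K (Ideal.span {s} * C ^ m)) ≤ toK R K I :=
    htI ▸ vOp_le_tOp (toK_ne_bot hD0)
      (Submodule.FG.map _ (Ideal.FG.mul (fg_span_singleton s) (hC.pow (n := m)))) (toK_mono hsC)
  intro x hx
  obtain ⟨x₀, rfl⟩ := mem_one.1 (vOp_le_one (toK_le_one C) hx)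
  have hsx : algebraMap R K (s * x₀ ^ m) ∈ vOp (toK R K (Ideal.span {s} * C ^ m)) := by
    rw [toK_mul, toK_span, toK_pow, Set.image_singleton, map_mul, map_pow]
    exact vOp_mul_vOp_le _ _ (mul_mem_mul (le_vOp _ (mem_span_singleton_self _))
      (vOp_pow_le _ m (pow_mem_pow _ hx m)))
  have hsxP : s * x₀ ^ m ∈ P := hP.1.2 (algebraMap_mem_toK_iff.1 (hvD hsx))
  exact algebraMap_mem_toK_iff.2
    (hP.1.1.mem_of_pow_mem m ((hP.1.1.mem_or_mem hsxP).resolve_left hsP))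

theorem not_isTInvertible_of_isSubringOf_dual {I P : Ideal R} (htI : IsTIdeal K I)
    (hS : IsSubringOf (dual (toK R K I))) (hP : P ∈ I.minimalPrimes) : ¬ IsTInvertible K P := by
  intro hPinv
  set N := dual (toK R K P)
  obtain ⟨B, hBfg, hB0, hBP, h1⟩ := exists_fg_one_mem_vOp_of_isTInvertible hPinv
  obtain ⟨s, hsP, m, hsB⟩ := exists_span_singleton_mul_pow_le hP hBfg hBP
  have hN : N ^ (m + 1) ≤ dual (toK R K I) :=
    pow_le_of_isSubringOf hS (dual_antitone (toK_mono hP.1.2)) _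
  have hsBN : span R {algebraMap R K s} * (toK R K B * N) ^ (m + 1) ≤ toK R K B :=
    calc _ = toK R K (Ideal.span {s} * B ^ m) * N ^ (m + 1) * toK R K B := by
          rw [toK_mul, toK_span, toK_pow, Set.image_singleton]; ring
      _ ≤ toK R K I * dual (toK R K I) * toK R K B := by gcongr; exact toK_mono hsB
      _ ≤ toK R K B := by simpa only [one_mul] using mul_le_mul' (mul_dual_le_one _) le_rfl
  have hs : algebraMap R K s ∈ vOp (toK R K B) := by
    have := vOp_mul_vOp_le _ _ (mul_mem_mul (le_vOp _ (mem_span_singleton_self (algebraMap R K s)))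
      (vOp_pow_le _ _ (pow_mem_pow _ h1 (m + 1))))
    rw [one_pow, mul_one] at this
    exact vOp_mono hsBN this
  exact hsP (algebraMap_mem_toK_iff.1 (vOp_toK_le_of_mem_minimalPrimes htI hP hBfg hB0 hBP hs))

end Domain

section Statements

variable {R : Type*} [CommRing R] [IsDomain R]
variable {K : Type*} [Field K] [Algebra R K] [IsFractionRing R K]

theorem statement_2_general (hR : IsPVMD R K) (I : Ideal R)
    (htI : IsTIdeal K I) (hrad : I.radical = I)
    (hirr : ∀ P ∈ I.minimalPrimes, ¬ sInf (I.minimalPrimes \ {P}) ≤ P) :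
    IsSubringOf (dual (toK R K I)) ↔ ∀ P ∈ I.minimalPrimes, ¬ IsTInvertible K P :=
  ⟨fun hS _ hP => not_isTInvertible_of_isSubringOf_dual htI hS hP, fun hP =>
    isSubringOf_dual_of_mul_mem (toK_le_one I) fun _ hx _ hy =>
      mul_mem_toK_of_mem_dual hR hrad hirr hP hx hy⟩

/-- Let `I` be a radical `t`-ideal of a PVMD `R` whose set of minimal
primes forms an irredundant intersection. Then `I⁻¹` is a subring of `K` iff no minimal
prime of `I` is `t`-invertible. -/
theorem statement_2 (hR : IsPVMD R K) (I : Ideal R) (hbot : I ≠ ⊥) (htop : I ≠ ⊤)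
    (htI : IsTIdeal K I) (hrad : I.radical = I)
    (hirr : ∀ P ∈ I.minimalPrimes, ¬ sInf (I.minimalPrimes \ {P}) ≤ P) :
    IsSubringOf (dual (toK R K I)) ↔ ∀ P ∈ I.minimalPrimes, ¬ IsTInvertible K P :=
  statement_2_general hR I htI hrad hirr

end Statements

end

end PVMDPaper
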